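/- For every z in the upper half-plane ℍ, lim_{n→∞} ∫_{−n}^{n} (s̃ₓ(z) − z) dx = iπ/2, where s̃ₓ(z) = x + √((z−x)² − 1). -/

import Mathlib

open Complex MeasureTheory Filter

/-- Complex square root with the branch chosen in the closed upper half-plane. -/
noncomputable def csqrtH (w : ℂ) : ℂ :=
  if 0 ≤ (w ^ (1/2 : ℂ)).im then w ^ (1/2 : ℂ) else -(w ^ (1/2 : ℂ))

/-- The slit map at `x`: `s̃ₓ(z) = x + √((z-x)² - 1)`, branch mapping ℍ into ℍ. -/
noncomputable def slitAt (x : ℝ) (z : ℂ) : ℂ := x + csqrtH ((z - x) ^ 2 - 1)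

/-- The complex derivative of the slit map at `x`: `(z-x)/√((z-x)² - 1)`. -/
noncomputable def slitDerivAt (x : ℝ) (z : ℂ) : ℂ := (z - x) / csqrtH ((z - x) ^ 2 - 1)

open Topology

/-!
For `w ∈ ℍ` let `u(w) = w + √(w² - 1)`, the inverse of the Joukowski map `u ↦ (u + u⁻¹)/2`
on `{u ∈ ℍ : ‖u‖ > 1}`. Then `s̃ₓ(z) - z = -u(z - x)⁻¹`, and `G = -(u⁻²/2 + log u)/2` is a
primitive of `-u⁻¹`, so the integral over `[-n, n]` is `G(z + n) - G(z - n)`.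
As `n → ∞`, `u(z ± n)/n → ±2`, the limit `-2` being approached from the upper half-plane;
hence `G(z + n) + (log n)/2 → -(log 2)/2` and `G(z - n) + (log n)/2 → -(log 2 + iπ)/2`.
-/

lemma one_sub_sq_mem_slitPlane {w : ℂ} (hw : w.im ≠ 0) : 1 - w ^ 2 ∈ slitPlane := by
  rcases eq_or_ne w.re 0 with hre | hre
  · left
    simp only [sub_re, one_re, sq, mul_re, hre]
    nlinarith
  · right
    simp only [sub_im, one_im, sq, mul_im]
    intro h
    exact mul_ne_zero hre hw (by linarith)

lemma re_cpow_inv_two_pos {x : ℂ} (hx : x ∈ slitPlane) : 0 < (x ^ (2⁻¹ : ℂ)).re := by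
  rw [cpow_inv_two_re, Real.sqrt_pos]
  rcases mem_slitPlane_iff.1 hx with h | h
  · positivity
  · linarith [abs_re_lt_norm.2 h, neg_abs_le x.re]

lemma csqrtH_sq (w : ℂ) : csqrtH w ^ 2 = w := by
  unfold csqrtH; split_ifs <;> simp

lemma csqrtH_im_nonneg (w : ℂ) : 0 ≤ (csqrtH w).im := by
  unfold csqrtH; split_ifs with h
  · exact h
  · simp only [neg_im]; linarith

lemma csqrtH_eq_of_sq_eq {w v : ℂ} (hv : v ^ 2 = w) (hv_im : 0 < v.im) : csqrtH w = v := by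
  have h : (csqrtH w - v) * (csqrtH w + v) = 0 := by
    linear_combination csqrtH_sq w - hv
  rcases mul_eq_zero.1 h with h | h
  · exact sub_eq_zero.1 h
  · have := csqrtH_im_nonneg w
    rw [eq_neg_of_add_eq_zero_left h, neg_im] at this
    linarith

noncomputable def sqrtSqSubOne (w : ℂ) : ℂ := I * (1 - w ^ 2) ^ (2⁻¹ : ℂ)

lemma sqrtSqSubOne_sq (w : ℂ) : sqrtSqSubOne w ^ 2 = w ^ 2 - 1 := by
  rw [sqrtSqSubOne, mul_pow, I_sq, cpow_ofNat_inv_pow]; ring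

lemma sqrtSqSubOne_im_pos {w : ℂ} (hw : w.im ≠ 0) : 0 < (sqrtSqSubOne w).im := by
  simpa [sqrtSqSubOne] using re_cpow_inv_two_pos (one_sub_sq_mem_slitPlane hw)

lemma sqrtSqSubOne_ne_zero {w : ℂ} (hw : w.im ≠ 0) : sqrtSqSubOne w ≠ 0 := fun h => by
  simpa [h] using sqrtSqSubOne_im_pos hw

lemma csqrtH_sq_sub_one {w : ℂ} (hw : w.im ≠ 0) : csqrtH (w ^ 2 - 1) = sqrtSqSubOne w :=
  csqrtH_eq_of_sq_eq (sqrtSqSubOne_sq w) (sqrtSqSubOne_im_pos hw)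

lemma hasDerivAt_sqrtSqSubOne {w : ℂ} (hw : w.im ≠ 0) :
    HasDerivAt sqrtSqSubOne (w / sqrtSqSubOne w) w := by
  have h : HasDerivAt (fun w : ℂ => 1 - w ^ 2) (-(2 * w)) w := by
    simpa using (hasDerivAt_pow 2 w).const_sub 1
  refine ((h.cpow_const (one_sub_sq_mem_slitPlane hw)).const_mul I).congr_deriv ?_
  have hV := sqrtSqSubOne_ne_zero hw
  rw [show (2⁻¹ : ℂ) - 1 = -2⁻¹ by norm_num, cpow_neg]
  rw [sqrtSqSubOne] at hV ⊢
  generalize (1 - w ^ 2) ^ (2⁻¹ : ℂ) = s at hV ⊢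
  have hs : s ≠ 0 := right_ne_zero_of_mul hV
  field_simp
  linear_combination (-w) * I_sq

noncomputable def joukowskiInv (w : ℂ) : ℂ := w + sqrtSqSubOne w

lemma joukowskiInv_mul_sub (w : ℂ) : joukowskiInv w * (w - sqrtSqSubOne w) = 1 := by
  rw [joukowskiInv]
  linear_combination (-1 : ℂ) * sqrtSqSubOne_sq w

lemma inv_joukowskiInv (w : ℂ) : (joukowskiInv w)⁻¹ = w - sqrtSqSubOne w :=
  inv_eq_of_mul_eq_one_right (joukowskiInv_mul_sub w)

lemma joukowskiInv_ne_zero (w : ℂ) : joukowskiInv w ≠ 0 :=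
  left_ne_zero_of_mul_eq_one (joukowskiInv_mul_sub w)

lemma joukowskiInv_add_inv (w : ℂ) : joukowskiInv w + (joukowskiInv w)⁻¹ = 2 * w := by
  rw [inv_joukowskiInv, joukowskiInv]; ring

lemma joukowskiInv_im_pos {w : ℂ} (hw : 0 < w.im) : 0 < (joukowskiInv w).im := by
  have := sqrtSqSubOne_im_pos hw.ne'
  simp only [joukowskiInv, add_im]
  linarith

lemma one_lt_norm_joukowskiInv {w : ℂ} (hw : 0 < w.im) : 1 < ‖joukowskiInv w‖ := by
  have hsum := joukowskiInv_add_inv w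
  set u := joukowskiInv w
  have hprod : 0 < u.im * (1 - (normSq u)⁻¹) := by
    have h : (u + u⁻¹).im = u.im * (1 - (normSq u)⁻¹) := by rw [add_im, inv_im]; ring
    rw [← h, hsum]
    simpa using hw
  have hinv : (normSq u)⁻¹ < 1 :=
    sub_pos.1 (pos_of_mul_pos_right hprod (joukowskiInv_im_pos hw).le)
  rw [← one_lt_sq_iff₀ (norm_nonneg _), ← normSq_eq_norm_sq]
  exact (inv_lt_one₀ (normSq_pos.2 (joukowskiInv_ne_zero w))).1 hinv

lemma hasDerivAt_joukowskiInv {w : ℂ} (hw : w.im ≠ 0) :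
    HasDerivAt joukowskiInv (joukowskiInv w / sqrtSqSubOne w) w := by
  refine ((hasDerivAt_id w).add (hasDerivAt_sqrtSqSubOne hw)).congr_deriv ?_
  have := sqrtSqSubOne_ne_zero hw
  rw [joukowskiInv]; field_simp; ring

lemma slitAt_sub_eq {z : ℂ} (hz : 0 < z.im) (x : ℝ) :
    slitAt x z - z = -(joukowskiInv (z - x))⁻¹ := by
  rw [slitAt, csqrtH_sq_sub_one (by simpa using hz.ne'), inv_joukowskiInv]; ring

noncomputable def joukowskiPrimitive (w : ℂ) : ℂ :=
  -((joukowskiInv w)⁻¹ ^ 2 / 2 + log (joukowskiInv w)) / 2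

lemma hasDerivAt_joukowskiPrimitive {w : ℂ} (hw : 0 < w.im) :
    HasDerivAt joukowskiPrimitive (-(joukowskiInv w)⁻¹) w := by
  have hu := hasDerivAt_joukowskiInv hw.ne'
  have hu0 := joukowskiInv_ne_zero w
  have hslit : joukowskiInv w ∈ slitPlane := Or.inr (joukowskiInv_im_pos hw).ne'
  refine ((((hu.inv hu0).pow 2).div_const 2).add (hu.clog hslit)).neg.div_const 2 |>.congr_deriv ?_
  have hV := sqrtSqSubOne_ne_zero hw.ne'
  have hsq := sqrtSqSubOne_sq w
  simp only [Pi.inv_apply, Nat.cast_ofNat, Nat.add_one_sub_one, pow_one]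
  rw [joukowskiInv] at hu0 ⊢
  field_simp
  linear_combination hsq

lemma continuous_inv_joukowskiInv_sub {z : ℂ} (hz : 0 < z.im) :
    Continuous fun x : ℝ => (joukowskiInv (z - x))⁻¹ := by
  refine continuous_iff_continuousAt.2 fun x => ?_
  have hw : (z - x).im ≠ 0 := by simpa using hz.ne'
  have h : ContinuousAt (fun x : ℝ => joukowskiInv (z - x)) x :=
    (hasDerivAt_joukowskiInv hw).continuousAt.comp (f := fun x : ℝ => z - x) (by fun_prop)
  exact h.inv₀ (joukowskiInv_ne_zero _)

lemma intervalIntegral_slitAt_sub {z : ℂ} (hz : 0 < z.im) (a b : ℝ) :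
    ∫ x in a..b, (slitAt x z - z) = joukowskiPrimitive (z - a) - joukowskiPrimitive (z - b) := by
  have hderiv (x : ℝ) :
      HasDerivAt (fun x : ℝ => -joukowskiPrimitive (z - x)) (slitAt x z - z) x := by
    have hw : 0 < (z - x).im := by simpa using hz
    rw [slitAt_sub_eq hz]
    have hG := (hasDerivAt_joukowskiPrimitive hw).comp (x : ℂ) ((hasDerivAt_id _).const_sub z)
    simpa using hG.neg.comp_ofReal
  rw [intervalIntegral.integral_eq_sub_of_hasDerivAt (fun x _ => hderiv x)]
  · ring
  · simp_rw [slitAt_sub_eq hz]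
    exact (continuous_inv_joukowskiInv_sub hz).neg.intervalIntegrable a b

lemma tendsto_ofReal_inv_atTop_zero : Tendsto (fun r : ℝ => (r : ℂ)⁻¹) atTop (𝓝 0) := by
  simpa [Function.comp_def] using (continuous_ofReal.tendsto 0).comp tendsto_inv_atTop_zero

lemma tendsto_joukowskiInv_div {z : ℂ} (hz : 0 < z.im) (c : ℝ) :
    Tendsto (fun r : ℝ => joukowskiInv (z + c * r) / r) atTop (𝓝 (2 * c)) := by
  have hinv_u : Tendsto (fun r : ℝ => (joukowskiInv (z + c * r))⁻¹ * (r : ℂ)⁻¹) atTop (𝓝 0) := by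
    refine squeeze_zero_norm' ?_ tendsto_inv_atTop_zero
    filter_upwards [eventually_gt_atTop 0] with r hr
    have hw : 0 < (z + c * r).im := by simpa using hz
    simp only [norm_mul, norm_inv, norm_real, Real.norm_of_nonneg hr.le]
    exact mul_le_of_le_one_left (by positivity)
      (inv_le_one_of_one_le₀ (one_lt_norm_joukowskiInv hw).le)
  have hlim := ((tendsto_const_nhds (x := 2 * (c : ℂ))).add
    (tendsto_ofReal_inv_atTop_zero.const_mul (2 * z))).sub hinv_u
  rw [mul_zero, add_zero, sub_zero] at hlim
  refine hlim.congr' ?_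
  filter_upwards [eventually_ne_atTop 0] with r hr
  have hr' : (r : ℂ) ≠ 0 := ofReal_ne_zero.2 hr
  have h := joukowskiInv_add_inv (z + c * r)
  field_simp
  linear_combination (-1 : ℂ) * h

lemma tendsto_joukowskiInv_add_div {z : ℂ} (hz : 0 < z.im) :
    Tendsto (fun r : ℝ => joukowskiInv (z + r) / r) atTop (𝓝 2) := by
  simpa using tendsto_joukowskiInv_div hz 1

lemma tendsto_joukowskiInv_sub_div {z : ℂ} (hz : 0 < z.im) :
    Tendsto (fun r : ℝ => joukowskiInv (z - r) / r) atTop (𝓝[{w | 0 ≤ w.im}] (-2)) := by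
  refine tendsto_nhdsWithin_iff.2
    ⟨by simpa [← sub_eq_add_neg] using tendsto_joukowskiInv_div hz (-1), ?_⟩
  filter_upwards [eventually_gt_atTop 0] with r hr
  have hw : 0 < (z - r).im := by simpa using hz
  rw [div_ofReal_im]
  exact div_nonneg (joukowskiInv_im_pos hw).le hr.le

lemma tendsto_joukowskiPrimitive_add_log {w : ℝ → ℂ} {a L : ℂ} (ha : a ≠ 0)
    (hdiv : Tendsto (fun r : ℝ => joukowskiInv (w r) / r) atTop (𝓝 a))
    (hlog : Tendsto (fun r : ℝ => log (joukowskiInv (w r) / r)) atTop (𝓝 L)) :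
    Tendsto (fun r : ℝ => joukowskiPrimitive (w r) + Real.log r / 2) atTop (𝓝 (-L / 2)) := by
  have hinv := (hdiv.inv₀ ha).mul tendsto_ofReal_inv_atTop_zero
  rw [mul_zero] at hinv
  have hlim := ((hinv.pow 2).div_const 2 |>.add hlog).neg.div_const 2
  rw [zero_pow two_ne_zero, zero_div, zero_add] at hlim
  refine hlim.congr' ?_
  filter_upwards [eventually_gt_atTop 0] with r hr
  have hu := joukowskiInv_ne_zero (w r)
  have hr' : (r : ℂ) ≠ 0 := ofReal_ne_zero.2 hr.ne'
  have hlog_mul : log (joukowskiInv (w r)) = Real.log r + log (joukowskiInv (w r) / r) := by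
    rw [← log_ofReal_mul hr (div_ne_zero hu hr'), mul_div_cancel₀ _ hr']
  rw [joukowskiPrimitive, hlog_mul, inv_div, div_mul_eq_mul_div, mul_inv_cancel₀ hr', one_div]
  ring

/-- `lim_{n→∞} ∫_{-n}^{n} (s̃ₓ(z) - z) dx = iπ/2` for every `z ∈ ℍ`. -/
theorem stmt_3 (z : ℂ) (hz : 0 < z.im) :
    Tendsto (fun n : ℕ => ∫ x in (-(n:ℝ))..(n:ℝ), (slitAt x z - z))
      atTop (nhds (Complex.I * Real.pi / 2)) := by
  have hpos := tendsto_joukowskiPrimitive_add_log two_ne_zero (tendsto_joukowskiInv_add_div hz)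
    ((continuousAt_clog (by norm_num)).tendsto.comp (tendsto_joukowskiInv_add_div hz))
  have hneg := tendsto_joukowskiPrimitive_add_log (by norm_num)
    (tendsto_nhdsWithin_iff.1 (tendsto_joukowskiInv_sub_div hz)).1
    ((tendsto_log_nhdsWithin_im_nonneg_of_re_neg_of_im_zero (by norm_num) (by norm_num)).comp
      (tendsto_joukowskiInv_sub_div hz))
  convert (hpos.sub hneg).comp tendsto_natCast_atTop_atTop using 2 with n
  · simp [intervalIntegral_slitAt_sub hz]
  · simp only [norm_neg, norm_ofNat, ofNat_log, neg_add_rev]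
    ring
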